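/- Let (W'_n) be the random walk on ℤ started at 0 with i.i.d. steps equal to +2 with probability 1/3 and −1 with probability 2/3, let φ'_{−1} = inf{n ≥ 1 : W'_n = −1}, and for 0 < z < 1 set g(z) = E[z^{φ'_{−1}}] = Σ_{n≥1} z^n P(φ'_{−1} = n). Then g(z) = (z/3)·g(z)³ + 2z/3 for all 0 < z < 1, and lim_{z↑1} (1 − g(z))/√(1−z) = 1. -/

import Mathlib

open MeasureTheory Set Filter
open scoped ENNReal

noncomputable section

/-- The sample space of the steps: `Bool`-sequences, `true` coding a `+2` step
(probability `1/3`) and `false` a `-1` step (probability `2/3`). -/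
abbrev Om : Type := ℕ → Bool

/-- The random walk `W'_n = η₁ + ⋯ + η_n` with steps `+2` or `-1`. -/
def W' (ω : Om) (n : ℕ) : ℤ := ∑ i ∈ Finset.range n, (if ω i then (2:ℤ) else -1)

/-- The event `{φ'_{-1} = n}`: the first hitting time of `-1` by the walk equals `n`. -/
def hitW' (n : ℕ) : Set Om :=
  {ω : Om | W' ω n = -1 ∧ ∀ m : ℕ, 1 ≤ m → m < n → W' ω m ≠ -1}

/-- The generating function `g(z) = E[z^{φ'_{-1}}] = ∑_{n≥1} z^n P(φ'_{-1} = n)`. -/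
def genFun (P : Measure Om) (z : ℝ) : ℝ :=
  ∑' n : ℕ, z^(n+1) * (P (hitW' (n+1))).toReal

/-!
Let `f a n` (`firstPassage a n`) be the probability that the walk, started `a` levels above a
target, first reaches it at step `n`. Conditioning on the first step gives
`f (a+1) (n+1) = 2/3 f a n + 1/3 f (a+3) n`, and descending `a + 1` levels means descending `a`
levels and then one more, so the generating functions satisfy `G_a = G_1 ^ a`. The first-step
equation for `g = G_1` then reads `g = z (2/3 + g³/3)`, i.e. `3 (1 - z) g = z (1 - g)² (g + 2)`.
As `0 ≤ g ≤ 1`, this forces `g → 1` as `z ↑ 1`, and then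
`(1 - g)² / (1 - z) = 3 g / (z (g + 2)) → 1`.
-/

open Finset
open scoped NNReal Topology

def firstPassage : ℕ → ℕ → ℝ≥0
  | 0, 0 => 1
  | _ + 1, 0 => 0
  | 0, _ + 1 => 0
  | a + 1, n + 1 => 2/3 * firstPassage a n + 1/3 * firstPassage (a + 3) n

@[simp] lemma firstPassage_zero_zero : firstPassage 0 0 = 1 := rfl

@[simp] lemma firstPassage_succ_zero (a : ℕ) : firstPassage (a + 1) 0 = 0 := rfl

@[simp] lemma firstPassage_zero_succ (n : ℕ) : firstPassage 0 (n + 1) = 0 := rfl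

lemma firstPassage_succ_succ (a n : ℕ) :
    firstPassage (a + 1) (n + 1) = 2/3 * firstPassage a n + 1/3 * firstPassage (a + 3) n := rfl

lemma sum_range_firstPassage_le_one (a N : ℕ) : ∑ n ∈ range N, firstPassage a n ≤ 1 := by
  induction N generalizing a with
  | zero => simp
  | succ N ih =>
    rw [sum_range_succ']
    cases a with
    | zero => simp
    | succ a =>
      simp only [firstPassage_succ_succ, sum_add_distrib, ← mul_sum, firstPassage_succ_zero,
        add_zero]
      calc _ ≤ (2/3 : ℝ≥0) * 1 + 1/3 * 1 := by gcongr <;> exact ih _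
        _ = 1 := by rw [← NNReal.coe_inj]; push_cast; norm_num

lemma firstPassage_le_one (a n : ℕ) : firstPassage a n ≤ 1 :=
  (single_le_sum (fun _ _ => by positivity) (mem_range.2 n.lt_succ_self)).trans
    (sum_range_firstPassage_le_one a (n + 1))

lemma firstPassage_succ_eq_sum_antidiagonal (a n : ℕ) :
    firstPassage (a + 1) n = ∑ p ∈ antidiagonal n, firstPassage a p.1 * firstPassage 1 p.2 := by
  induction n generalizing a with
  | zero => simp
  | succ n ih =>
    rw [Nat.sum_antidiagonal_succ]
    cases a with
    | zero => simp
    | succ a =>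
      simp only [firstPassage_succ_succ, add_mul, sum_add_distrib, mul_assoc, ← mul_sum, ← ih,
        firstPassage_succ_zero, zero_mul, zero_add]

lemma tsum_succ_eq_tsum_of_apply_zero {M : Type*} [AddCommMonoid M] [TopologicalSpace M]
    {f : ℕ → M} (h0 : f 0 = 0) : ∑' n, f (n + 1) = ∑' n, f n :=
  Nat.succ_injective.tsum_eq fun n hn =>
    ⟨n - 1, Nat.succ_pred_eq_of_ne_zero (by rintro rfl; exact hn h0)⟩

def firstPassageGF (a : ℕ) (z : ℝ) : ℝ := ∑' n, z ^ n * firstPassage a n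

section GeneratingFunction

variable {z : ℝ}

lemma summable_norm_pow_mul_firstPassage (a : ℕ) (hz : |z| < 1) :
    Summable fun n => ‖z ^ n * (firstPassage a n : ℝ)‖ := by
  refine (summable_geometric_of_lt_one (abs_nonneg z) hz).of_nonneg_of_le (fun _ => norm_nonneg _)
    fun n => ?_
  rw [norm_mul, norm_pow, Real.norm_eq_abs, NNReal.norm_eq]
  exact mul_le_of_le_one_right (by positivity) (firstPassage_le_one a n)

lemma summable_pow_mul_firstPassage (a : ℕ) (hz : |z| < 1) :
    Summable fun n => z ^ n * (firstPassage a n : ℝ) :=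
  (summable_norm_pow_mul_firstPassage a hz).of_norm

@[simp] lemma firstPassageGF_zero (z : ℝ) : firstPassageGF 0 z = 1 := by
  rw [firstPassageGF, tsum_eq_single 0 fun n hn => ?_]
  · simp
  · obtain ⟨n, rfl⟩ := Nat.exists_eq_succ_of_ne_zero hn
    simp

lemma firstPassageGF_succ_eq_mul (a : ℕ) (hz : |z| < 1) :
    firstPassageGF (a + 1) z = firstPassageGF a z * firstPassageGF 1 z := by
  rw [firstPassageGF, firstPassageGF, firstPassageGF,
    tsum_mul_tsum_eq_tsum_sum_antidiagonal_of_summable_norm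
      (summable_norm_pow_mul_firstPassage a hz) (summable_norm_pow_mul_firstPassage 1 hz)]
  refine tsum_congr fun n => ?_
  rw [firstPassage_succ_eq_sum_antidiagonal, NNReal.coe_sum, mul_sum]
  refine sum_congr rfl fun p hp => ?_
  rw [← mem_antidiagonal.1 hp, pow_add, NNReal.coe_mul]
  ring

lemma firstPassageGF_eq_pow (a : ℕ) (hz : |z| < 1) :
    firstPassageGF a z = firstPassageGF 1 z ^ a := by
  induction a with
  | zero => simp
  | succ a ih => rw [firstPassageGF_succ_eq_mul a hz, ih, pow_succ]

lemma firstPassageGF_succ_eq (a : ℕ) (hz : |z| < 1) :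
    firstPassageGF (a + 1) z =
      z * (2/3 * firstPassageGF a z + 1/3 * firstPassageGF (a + 3) z) := by
  rw [firstPassageGF, ← tsum_succ_eq_tsum_of_apply_zero (by simp), firstPassageGF, firstPassageGF]
  calc ∑' n, z ^ (n + 1) * (firstPassage (a + 1) (n + 1) : ℝ)
      = ∑' n, (z * (2/3) * (z ^ n * (firstPassage a n : ℝ))
          + z * (1/3) * (z ^ n * (firstPassage (a + 3) n : ℝ))) := by
        refine tsum_congr fun n => ?_
        rw [firstPassage_succ_succ]
        push_cast
        ring
    _ = _ := by
        rw [((summable_pow_mul_firstPassage a hz).mul_left _).tsum_add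
          ((summable_pow_mul_firstPassage (a + 3) hz).mul_left _), tsum_mul_left, tsum_mul_left]
        ring

lemma firstPassageGF_one_eq_cubic (hz : |z| < 1) :
    firstPassageGF 1 z = z / 3 * firstPassageGF 1 z ^ 3 + 2 * z / 3 := by
  have h := firstPassageGF_succ_eq 0 hz
  rw [firstPassageGF_zero, firstPassageGF_eq_pow 3 hz] at h
  linear_combination h

lemma firstPassageGF_nonneg (a : ℕ) (hz : 0 ≤ z) : 0 ≤ firstPassageGF a z :=
  tsum_nonneg fun _ => by positivity

lemma firstPassageGF_le_one (a : ℕ) (hz₀ : 0 ≤ z) (hz₁ : z ≤ 1) :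
    firstPassageGF a z ≤ 1 :=
  Real.tsum_le_of_sum_range_le (fun _ => by positivity) fun N =>
    calc ∑ n ∈ range N, z ^ n * (firstPassage a n : ℝ)
        ≤ ∑ n ∈ range N, (firstPassage a n : ℝ) :=
          sum_le_sum fun n _ => mul_le_of_le_one_left (by positivity) (pow_le_one₀ hz₀ hz₁)
      _ ≤ 1 := by exact_mod_cast sum_range_firstPassage_le_one a N

end GeneratingFunction

def HitsFirstAt (a : ℤ) (n : ℕ) (ω : Om) : Prop := W' ω n = -a ∧ ∀ m < n, W' ω m ≠ -a

lemma W'_zero (ω : Om) : W' ω 0 = 0 := by simp [W']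

lemma W'_succ (ω : Om) (m : ℕ) :
    W' ω (m + 1) = (if ω 0 then 2 else -1) + W' (fun i => ω (i + 1)) m := by
  rw [W', sum_range_succ', add_comm]
  rfl

lemma dependsOn_W' (m : ℕ) : DependsOn (fun ω => W' ω m) (Set.Iio m) :=
  fun _ _ h => sum_congr rfl fun i hi => by rw [h i (mem_range.1 hi)]

lemma dependsOn_hitsFirstAt (a : ℤ) (n : ℕ) : DependsOn (HitsFirstAt a n) (Set.Iio n) := by
  intro ω ω' h
  have hW : ∀ m ≤ n, W' ω m = W' ω' m := fun m hm =>
    dependsOn_W' m fun i hi => h i (lt_of_lt_of_le hi hm)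
  simp only [HitsFirstAt, hW n le_rfl]
  exact propext <| and_congr_right fun _ => forall₂_congr fun m hm => by rw [hW m hm.le]

lemma hitsFirstAt_succ_iff {a : ℤ} (ha : a ≠ 0) (n : ℕ) (ω : Om) :
    HitsFirstAt a (n + 1) ω ↔
      HitsFirstAt (a + if ω 0 then 2 else -1) n (fun i => ω (i + 1)) := by
  simp only [HitsFirstAt, W'_succ]
  constructor
  · rintro ⟨hn, hm⟩
    exact ⟨by omega, fun m hlt heq => hm (m + 1) (by omega) (by rw [W'_succ]; omega)⟩
  · rintro ⟨hn, hm⟩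
    refine ⟨by omega, fun m hlt => ?_⟩
    cases m with
    | zero => rw [W'_zero]; omega
    | succ m => rw [W'_succ]; have := hm m (by omega); omega

lemma hitW'_succ (n : ℕ) : hitW' (n + 1) = {ω | HitsFirstAt 1 (n + 1) ω} := by
  ext ω
  refine and_congr_right fun _ => ⟨fun h m hm => ?_, fun h m _ hm => h m hm⟩
  cases m with
  | zero => rw [W'_zero]; omega
  | succ m => exact h (m + 1) (by omega) hm

def padFalse (n : ℕ) (f : Fin n → Bool) : Om :=
  fun i => if h : i < n then f ⟨i, h⟩ else false

lemma padFalse_of_lt {n i : ℕ} (f : Fin n → Bool) (hi : i < n) :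
    padFalse n f i = f ⟨i, hi⟩ :=
  dif_pos hi

@[simp] lemma padFalse_cons_zero (n : ℕ) (b : Bool) (g : Fin n → Bool) :
    padFalse (n + 1) (Fin.cons b g) 0 = b := rfl

lemma padFalse_cons_succ (n : ℕ) (b : Bool) (g : Fin n → Bool) :
    (fun i => padFalse (n + 1) (Fin.cons b g) (i + 1)) = padFalse n g := by
  funext i
  by_cases hi : i < n
  · rw [padFalse_of_lt _ hi, padFalse_of_lt _ (by omega)]
    exact Fin.cons_succ (α := fun _ => Bool) b g ⟨i, hi⟩
  · simp [padFalse, hi]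

def HasCylinderProducts (P : Measure Om) (p : Bool → ℝ≥0∞) : Prop :=
  ∀ (n : ℕ) (f : ℕ → Bool), P {ω : Om | ∀ i < n, ω i = f i} = ∏ i ∈ range n, p (f i)

open scoped Classical in
lemma measure_eq_sum_of_dependsOn {P : Measure Om} {p : Bool → ℝ≥0∞}
    (hP : HasCylinderProducts P p)
    {S : Set Om} {n : ℕ} (hS : DependsOn (· ∈ S) (Set.Iio n)) :
    P S = ∑ f : Fin n → Bool, if padFalse n f ∈ S then ∏ i, p (f i) else 0 := by
  set r : Om → (Fin n → Bool) := fun ω i => ω i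
  have hr : Measurable r := measurable_pi_lambda _ fun i => measurable_pi_apply _
  have hpad : ∀ ω, ∀ i < n, padFalse n (r ω) i = ω i := fun ω i hi => padFalse_of_lt _ hi
  have hSr : S = r ⁻¹' ↑(univ.filter fun f => padFalse n f ∈ S) := by
    ext ω
    simp only [Set.mem_preimage, coe_filter, Finset.mem_univ, true_and, Set.mem_ofPred_eq]
    exact eq_iff_iff.1 (hS fun i hi => (hpad ω i hi).symm)
  have hfibre : ∀ f, r ⁻¹' {f} = {ω : Om | ∀ i < n, ω i = padFalse n f i} := fun f => by
    ext ω
    simp only [Set.mem_preimage, Set.mem_singleton_iff, Set.mem_ofPred_eq, funext_iff, r]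
    exact ⟨fun h i hi => by rw [padFalse_of_lt _ hi, ← h],
      fun h i => by rw [h i i.2, padFalse_of_lt]⟩
  conv_lhs => rw [hSr]
  rw [← sum_measure_preimage_singleton _ fun f _ => hr (measurableSet_singleton f), sum_filter]
  refine sum_congr rfl fun f _ => if_congr Iff.rfl ?_ rfl
  rw [hfibre, hP, ← Fin.prod_univ_eq_prod_range (fun i => p (padFalse n f i))]
  exact prod_congr rfl fun i _ => by rw [padFalse_of_lt]

def stepProb (b : Bool) : ℝ≥0∞ := if b then 1/3 else 2/3

open scoped Classical in
def hitWeight (a : ℤ) (n : ℕ) : ℝ≥0∞ :=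
  ∑ f : Fin n → Bool, if HitsFirstAt a n (padFalse n f) then ∏ i, stepProb (f i) else 0

lemma hitWeight_zero (a : ℤ) : hitWeight a 0 = if a = 0 then 1 else 0 := by
  simp [hitWeight, HitsFirstAt, W'_zero, eq_comm (a := (0 : ℤ))]

lemma hitWeight_zero_succ (n : ℕ) : hitWeight 0 (n + 1) = 0 :=
  sum_eq_zero fun f _ => if_neg fun h => h.2 0 n.succ_pos (by rw [W'_zero, neg_zero])

open scoped Classical in
lemma hitWeight_succ {a : ℤ} (ha : a ≠ 0) (n : ℕ) :
    hitWeight a (n + 1) = 1/3 * hitWeight (a + 2) n + 2/3 * hitWeight (a - 1) n := by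
  have first_step : ∀ b : Bool, ∑ g : Fin n → Bool,
      (if HitsFirstAt a (n + 1) (padFalse (n + 1) (Fin.cons b g))
        then ∏ i, stepProb ((Fin.cons b g : Fin (n + 1) → Bool) i) else 0)
      = stepProb b * hitWeight (a + if b then 2 else -1) n := fun b => by
    rw [hitWeight, mul_sum]
    refine sum_congr rfl fun g _ => ?_
    rw [hitsFirstAt_succ_iff ha, padFalse_cons_succ, padFalse_cons_zero, mul_ite, mul_zero,
      Fin.prod_univ_succ]
    simp only [Fin.cons_zero, Fin.cons_succ]
  rw [hitWeight, ← (Fin.consEquiv fun _ => Bool).sum_comp, Fintype.sum_prod_type,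
    Fintype.sum_bool]
  refine (congrArg₂ (· + ·) (first_step true) (first_step false)).trans ?_
  simp [stepProb, sub_eq_add_neg]

lemma hitWeight_eq_firstPassage (a n : ℕ) : hitWeight a n = firstPassage a n := by
  induction n generalizing a with
  | zero => simp only [hitWeight_zero, Nat.cast_eq_zero]; cases a <;> simp
  | succ n ih =>
    cases a with
    | zero => simp [hitWeight_zero_succ]
    | succ a =>
      rw [hitWeight_succ (by omega), firstPassage_succ_succ]
      have h3 : ((a + 1 : ℕ) : ℤ) + 2 = (a + 3 : ℕ) := by push_cast; ring
      have h1 : ((a + 1 : ℕ) : ℤ) - 1 = a := by push_cast; ring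
      rw [h3, h1, ih, ih]
      push_cast
      ring

lemma measure_hitW'_succ {P : Measure Om}
    (hP : HasCylinderProducts P stepProb)
    (n : ℕ) : P (hitW' (n + 1)) = firstPassage 1 (n + 1) := by
  rw [hitW'_succ, measure_eq_sum_of_dependsOn (S := {ω | HitsFirstAt 1 (n + 1) ω}) hP
      (dependsOn_hitsFirstAt 1 (n + 1)),
    ← Nat.cast_one, ← hitWeight_eq_firstPassage, hitWeight]
  rfl

lemma genFun_eq_firstPassageGF {P : Measure Om}
    (hP : HasCylinderProducts P stepProb)
    (z : ℝ) : genFun P z = firstPassageGF 1 z := by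
  simp_rw [genFun, measure_hitW'_succ hP, ENNReal.coe_toReal]
  exact tsum_succ_eq_tsum_of_apply_zero
    (f := fun n => z ^ n * (firstPassage 1 n : ℝ)) (by simp)

section Asymptotics

variable {z g : ℝ}

lemma three_mul_one_sub_mul_eq_of_cubic (h : g = z / 3 * g ^ 3 + 2 * z / 3) :
    3 * (1 - z) * g = z * (1 - g) ^ 2 * (g + 2) := by
  linear_combination 3 * h

lemma one_sub_sq_div_eq_of_cubic (hz : z ∈ Set.Ioo 0 1) (hg : 0 ≤ g)
    (h : g = z / 3 * g ^ 3 + 2 * z / 3) : (1 - g) ^ 2 / (1 - z) = 3 * g / (z * (g + 2)) := by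
  rw [div_eq_div_iff (by linarith [hz.2]) (by nlinarith [hz.1])]
  linear_combination -three_mul_one_sub_mul_eq_of_cubic h

lemma one_sub_sq_le_of_cubic (hz : z ∈ Set.Ioo 0 1) (hg : g ∈ Set.Icc 0 1)
    (h : g = z / 3 * g ^ 3 + 2 * z / 3) : (1 - g) ^ 2 ≤ 3 * (1 - z) / (2 * z) := by
  have key := three_mul_one_sub_mul_eq_of_cubic h
  rw [le_div_iff₀ (by linarith [hz.1])]
  nlinarith [hz.1, hz.2, hg.1, hg.2, mul_nonneg hz.1.le (sq_nonneg (1 - g))]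

end Asymptotics

lemma tendsto_one_of_cubic {g : ℝ → ℝ}
    (hcubic : ∀ z ∈ Set.Ioo 0 1, g z = z / 3 * g z ^ 3 + 2 * z / 3)
    (hg : ∀ z ∈ Set.Ioo 0 1, g z ∈ Set.Icc 0 1) : Tendsto g (𝓝[<] 1) (𝓝 1) := by
  have hlower : Tendsto (fun z : ℝ => 1 - √(3 * (1 - z) / (2 * z))) (𝓝[<] 1) (𝓝 1) := by
    have hc : ContinuousAt (fun z : ℝ => 1 - √(3 * (1 - z) / (2 * z))) 1 := by
      fun_prop (disch := norm_num)
    simpa using tendsto_nhdsWithin_of_tendsto_nhds hc.tendsto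
  refine tendsto_of_tendsto_of_tendsto_of_le_of_le' hlower tendsto_const_nhds ?_ ?_
  · filter_upwards [Ioo_mem_nhdsLT zero_lt_one] with z hz
    have := Real.abs_le_sqrt (one_sub_sq_le_of_cubic hz (hg z hz) (hcubic z hz))
    linarith [le_abs_self (1 - g z)]
  · filter_upwards [Ioo_mem_nhdsLT zero_lt_one] with z hz using (hg z hz).2

theorem tendsto_one_sub_div_sqrt_of_cubic {g : ℝ → ℝ}
    (hcubic : ∀ z ∈ Set.Ioo 0 1, g z = z / 3 * g z ^ 3 + 2 * z / 3)
    (hg : ∀ z ∈ Set.Ioo 0 1, g z ∈ Set.Icc 0 1) :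
    Tendsto (fun z => (1 - g z) / √(1 - z)) (𝓝[<] 1) (𝓝 1) := by
  have hlim : Tendsto (fun z => √(3 * g z / (z * (g z + 2)))) (𝓝[<] 1) (𝓝 1) := by
    have hg1 := tendsto_one_of_cubic hcubic hg
    have hz1 : Tendsto (fun z : ℝ => z) (𝓝[<] 1) (𝓝 1) :=
      tendsto_nhdsWithin_of_tendsto_nhds tendsto_id
    have h := ((hg1.const_mul 3).div (hz1.mul (hg1.add_const 2)) (by norm_num)).sqrt
    rwa [show √(3 * 1 / (1 * (1 + 2))) = (1 : ℝ) by norm_num] at h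
  refine hlim.congr' ?_
  filter_upwards [Ioo_mem_nhdsLT zero_lt_one] with z hz
  rw [← one_sub_sq_div_eq_of_cubic hz (hg z hz).1 (hcubic z hz), Real.sqrt_div (sq_nonneg _),
    Real.sqrt_sq (sub_nonneg.2 (hg z hz).2)]

theorem walk_plus2_minus1_hitting_generating_function_general (P : Measure Om)
    (hP : ∀ (n : ℕ) (f : ℕ → Bool),
      P {ω : Om | ∀ i < n, ω i = f i}
        = ∏ i ∈ Finset.range n, (if f i then (1/3 : ℝ≥0∞) else (2/3 : ℝ≥0∞))) :
    (∀ z : ℝ, z ∈ Set.Ioo (0:ℝ) 1 →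
      genFun P z = z/3 * (genFun P z)^3 + 2*z/3)
    ∧ Tendsto (fun z : ℝ => (1 - genFun P z) / Real.sqrt (1-z))
        (nhdsWithin 1 (Set.Iio 1)) (nhds 1) := by
  have hgen : genFun P = firstPassageGF 1 := funext (genFun_eq_firstPassageGF (P := P) hP)
  have habs : ∀ z ∈ Set.Ioo (0 : ℝ) 1, |z| < 1 :=
    fun z hz => abs_lt.2 ⟨by linarith [hz.1], hz.2⟩
  have hcubic : ∀ z ∈ Set.Ioo (0 : ℝ) 1, genFun P z = z / 3 * genFun P z ^ 3 + 2 * z / 3 :=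
    fun z hz => hgen ▸ firstPassageGF_one_eq_cubic (habs z hz)
  refine ⟨hcubic, tendsto_one_sub_div_sqrt_of_cubic hcubic fun z hz => ?_⟩
  rw [hgen]
  exact ⟨firstPassageGF_nonneg 1 hz.1.le, firstPassageGF_le_one 1 hz.1.le hz.2.le⟩

/-- For the random walk with i.i.d. steps `+2` with probability `1/3` and `-1` with
probability `2/3`, the generating function `g` of the first hitting time of `-1` satisfies
`g(z) = (z/3)·g(z)³ + 2z/3` for all `0 < z < 1`, and `(1 - g(z))/√(1-z) → 1` as `z ↑ 1`. -/
theorem walk_plus2_minus1_hitting_generating_function (P : Measure Om)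
    [IsProbabilityMeasure P]
    (hP : ∀ (n : ℕ) (f : ℕ → Bool),
      P {ω : Om | ∀ i < n, ω i = f i}
        = ∏ i ∈ Finset.range n, (if f i then (1/3 : ℝ≥0∞) else (2/3 : ℝ≥0∞))) :
    (∀ z : ℝ, z ∈ Set.Ioo (0:ℝ) 1 →
      genFun P z = z/3 * (genFun P z)^3 + 2*z/3)
    ∧ Tendsto (fun z : ℝ => (1 - genFun P z) / Real.sqrt (1-z))
        (nhdsWithin 1 (Set.Iio 1)) (nhds 1) :=
  walk_plus2_minus1_hitting_generating_function_general P hP
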